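/- Let S be an Arf numerical semigroup with multiplicity m(S) ≥ 2 and let k be a field. Then the defining ideal I_S of k[S] is generic if and only if m(S) ≤ 3. -/

import Mathlib

/-!
Write `x^a` for the monomial with exponent `a` and `deg a = ∑ aᵢ nᵢ`, so that `I_S` is spanned
by the binomials `x^a - x^b` with `deg a = deg b`.

If `m ≥ 4`, the Arf property puts `2n₁ - n₀` in `S`, giving a binomial `x₁² - x₀ x^c ∈ I_S`.
No monomial of a full-support binomial of `I_S` divides `x₁²`, since the other monomial then
involves `x₂` and `x₃` and has degree at least `n₂ + n₃ > 2n₁`. So full-support binomials only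
generate ideals inside the monomial ideal of monomials not dividing `x₁²`, which misses
`x₁² - x₀ x^c`.

If `m ≤ 3`, every binomial of `I_S` lies in the ideal generated by the full-support ones, by
induction on the degree: a common variable can be cancelled, and otherwise the binomial is
`x_u^α - x_v^β` with `α, β ≥ 2` by minimality. For `t ∈ {u, v}` with `t ≠ 0`, the Arf property
and `3 = n₀ ∤ n_t` give a full-support relation `x_t² - x^r`, which trades `x_t²` for a monomial
sharing a variable with the other side. Noetherianity then yields a minimal generating subset.
-/

/-- `S ⊆ ℕ` is a numerical semigroup: contains `0`, closed under addition,
and has finite complement in `ℕ`. -/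
def IsNumericalSemigroup (S : Set ℕ) : Prop :=
  0 ∈ S ∧ (∀ a ∈ S, ∀ b ∈ S, a + b ∈ S) ∧ (Sᶜ).Finite

/-- `S` satisfies the Arf condition: for `x ≤ y` in `S`, `2y - x ∈ S`. -/
def IsArf (S : Set ℕ) : Prop :=
  ∀ x ∈ S, ∀ y ∈ S, x ≤ y → 2 * y - x ∈ S

/-- `m` is the multiplicity of `S`: the smallest nonzero element. -/
def HasMultiplicity (S : Set ℕ) (m : ℕ) : Prop :=
  m ∈ S ∧ m ≠ 0 ∧ ∀ n ∈ S, n ≠ 0 → m ≤ n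

/-- `s` is the conductor of `S`: the least `t` with `[t, ∞) ⊆ S`. -/
def HasConductor (S : Set ℕ) (s : ℕ) : Prop :=
  (∀ n, s ≤ n → n ∈ S) ∧ ∀ t, (∀ n, t ≤ n → n ∈ S) → s ≤ t

/-- The set of pseudo-Frobenius numbers of `S`. -/
def pseudoFrobeniusSet (S : Set ℕ) : Set ℕ :=
  {z | z ∉ S ∧ ∀ n ∈ S, n ≠ 0 → z + n ∈ S}

/-- `A` is a row-factorization (RF-) matrix of `f` with respect to generators `n`:
diagonal entries are `-1`, off-diagonal entries are nonnegative, and every row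
gives a representation of `f` in terms of the generators. -/
def IsRFMatrix {e : ℕ} (n : Fin e → ℕ) (f : ℤ) (A : Matrix (Fin e) (Fin e) ℤ) : Prop :=
  (∀ i, A i i = -1) ∧ (∀ i j, i ≠ j → 0 ≤ A i j) ∧
    (∀ i, f = ∑ j, A i j * (n j : ℤ))

/-- The defining ideal `I_S` of `k[S]`: the kernel of
`k[x₁, …, x_e] → k[t]`, `x_i ↦ t^(n i)`. -/
noncomputable def definingIdeal (k : Type*) [Field k] {e : ℕ} (n : Fin e → ℕ) :
    Ideal (MvPolynomial (Fin e) k) :=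
  RingHom.ker (MvPolynomial.aeval (R := k)
    (fun i : Fin e => (Polynomial.X : Polynomial k) ^ n i)).toRingHom

open MvPolynomial Finsupp

theorem AddSubmonoid.notMem_closure_diff_singleton {M : Type*} [AddMonoid M] {A : Set M}
    (hA : ∀ T ⊆ A, closure T = closure A → T = A) {x : M} (hx : x ∈ A) :
    x ∉ closure (A \ {x}) := by
  intro h
  have hcl : closure (A \ {x}) = closure A := by
    refine le_antisymm (closure_mono Set.sdiff_subset) (closure_le.2 fun y hy => ?_)
    by_cases hyx : y = x
    · exact hyx ▸ h
    · exact subset_closure ⟨hy, hyx⟩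
  exact (hA _ Set.sdiff_subset hcl ▸ hx).2 rfl

theorem Ideal.exists_minimal_subset_span_eq {R : Type*} [CommRing R] [IsNoetherianRing R]
    (s : Set R) :
    ∃ G ⊆ s, span G = span s ∧ ∀ G' ⊆ G, span G' = span s → G' = G := by
  obtain ⟨t, hts, hspan⟩ :=
    (Submodule.fg_span_iff_fg_span_finset_subset s).1 (IsNoetherian.noetherian (span s))
  obtain ⟨G, -, hG⟩ := (t.finite_toSet.finite_subsets.subset
    fun G (h : G ⊆ t ∧ span G = span s) => h.1).exists_le_minimal
      (a := (t : Set R)) ⟨subset_rfl, hspan.symm⟩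
  exact ⟨G, hG.prop.1.trans hts, hG.prop.2,
    fun G' hG' h => hG.eq_of_le ⟨hG'.trans hG.prop.1, h⟩ hG'⟩

lemma Finsupp.eq_single_of_le_three {M : Type*} [Zero M] {m : ℕ} (hm : m ≤ 3) {u v w : Fin m}
    (huv : u ≠ v) (huw : u ≠ w) (hvw : v ≠ w) {a : Fin m →₀ M} (hv : a v = 0) (hw : a w = 0) :
    a = single u (a u) := by
  ext j
  obtain rfl | rfl | rfl : j = u ∨ j = v ∨ j = w := by
    simp only [ne_eq, Fin.ext_iff] at *
    omega
  all_goals simp [*, Ne.symm huv, Ne.symm huw]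

lemma Finsupp.weight_mono {σ : Type*} (w : σ → ℕ) {a b : σ →₀ ℕ} (h : a ≤ b) :
    weight w a ≤ weight w b := by
  obtain ⟨c, rfl⟩ := exists_add_of_le h
  simp

section Binomials

variable {R σ : Type*} [CommRing R]

def binomialCon (J : Ideal (MvPolynomial σ R)) : AddCon (σ →₀ ℕ) where
  r a b := monomial a (1 : R) - monomial b 1 ∈ J
  iseqv :=
    { refl := fun a => by simp
      symm := fun h => by simpa using J.neg_mem h
      trans := fun h h' => by simpa using J.add_mem h h' }
  add' {a b c d} h h' := by
    have hmul (x y : σ →₀ ℕ) : monomial (x + y) (1 : R) = monomial x 1 * monomial y 1 := by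
      rw [monomial_mul, mul_one]
    have : monomial (a + c) (1 : R) - monomial (b + d) 1 =
        monomial c 1 * (monomial a 1 - monomial b 1) +
          monomial b 1 * (monomial c 1 - monomial d 1) := by
      rw [hmul, hmul]
      ring
    exact this ▸ J.add_mem (J.mul_mem_left _ h) (J.mul_mem_left _ h')

variable (R σ) in
def fullSupportBinomials : Set (MvPolynomial σ R) :=
  {p | ∃ a b : σ →₀ ℕ, p = monomial a 1 - monomial b 1 ∧ ∀ i, a i ≠ 0 ∨ b i ≠ 0}

lemma prod_X_pow_eq_monomial_equivFunOnFinite [Fintype σ] (a : σ → ℕ) :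
    ∏ i, X i ^ a i = monomial (equivFunOnFinite.symm a) (1 : R) := by
  rw [monomial_eq, C_1, one_mul, Finsupp.prod_fintype _ _ fun _ => pow_zero _]
  rfl

lemma mem_fullSupportBinomials_iff [Fintype σ] {p : MvPolynomial σ R} :
    p ∈ fullSupportBinomials R σ ↔ ∃ a b : σ → ℕ,
      p = (∏ i, X i ^ a i) - ∏ i, X i ^ b i ∧ ∀ i, a i ≠ 0 ∨ b i ≠ 0 := by
  simp [fullSupportBinomials, prod_X_pow_eq_monomial_equivFunOnFinite,
    equivFunOnFinite.symm.exists_congr_left]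

end Binomials

section SemigroupRing

variable {k : Type*} [Field k] {m : ℕ} {n : Fin m → ℕ}

section DefiningIdeal

lemma mem_definingIdeal_iff {p : MvPolynomial (Fin m) k} :
    p ∈ definingIdeal k n ↔ aeval (fun i => (Polynomial.X : Polynomial k) ^ n i) p = 0 :=
  Iff.rfl

lemma aeval_monomial_one (a : Fin m →₀ ℕ) :
    aeval (fun i => (Polynomial.X : Polynomial k) ^ n i) (monomial a (1 : k)) =
      Polynomial.X ^ weight n a := by
  rw [aeval_monomial, map_one, one_mul, weight_apply, Finsupp.prod, Finsupp.sum,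
    ← Finset.prod_pow_eq_pow_sum]
  simp only [← pow_mul, smul_eq_mul, mul_comm]

lemma monomial_sub_monomial_mem_definingIdeal_iff {a b : Fin m →₀ ℕ} :
    monomial a (1 : k) - monomial b 1 ∈ definingIdeal k n ↔ weight n a = weight n b := by
  rw [mem_definingIdeal_iff, map_sub, aeval_monomial_one, aeval_monomial_one, sub_eq_zero]
  exact ⟨fun h => by simpa using congrArg Polynomial.natDegree h, congrArg _⟩

theorem definingIdeal_le_of_forall_monomial_sub_mem {J : Ideal (MvPolynomial (Fin m) k)}
    (hJ : ∀ a b : Fin m →₀ ℕ, weight n a = weight n b →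
      monomial a (1 : k) - monomial b 1 ∈ J) :
    definingIdeal k n ≤ J := by
  classical
  let π := Ideal.Quotient.mkₐ k J
  let ρ : ℕ → Fin m →₀ ℕ := fun d => if h : ∃ a, weight n a = d then h.choose else 0
  have hρ (a : Fin m →₀ ℕ) : π (monomial (ρ (weight n a)) 1) = π (monomial a 1) := by
    have h : ∃ b, weight n b = weight n a := ⟨a, rfl⟩
    rw [← sub_eq_zero, ← map_sub, Ideal.Quotient.mkₐ_eq_mk, Ideal.Quotient.eq_zero_iff_mem]
    simp only [ρ, dif_pos h]
    exact hJ _ _ h.choose_spec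
  -- `π` factors through `k[t]` via `t^d ↦ π x^(ρ d)`, hence kills `I_S`.
  let L : Polynomial k →ₗ[k] MvPolynomial (Fin m) k ⧸ J :=
    Polynomial.lsum fun d => LinearMap.toSpanSingleton k _ (π (monomial (ρ d) 1))
  have hL : L ∘ₗ (aeval fun i => (Polynomial.X : Polynomial k) ^ n i).toLinearMap =
      π.toLinearMap := by
    refine linearMap_ext fun a => LinearMap.ext_ring ?_
    simp only [LinearMap.comp_apply, AlgHom.toLinearMap_apply]
    rw [aeval_monomial_one, Polynomial.X_pow_eq_monomial, Polynomial.lsum_apply,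
      Polynomial.sum_monomial_index]
    · simp [hρ]
    · exact map_zero _
  intro p hp
  have := LinearMap.congr_fun hL p
  simp only [LinearMap.comp_apply, AlgHom.toLinearMap_apply, mem_definingIdeal_iff.1 hp,
    map_zero] at this
  rwa [eq_comm, Ideal.Quotient.mkₐ_eq_mk, Ideal.Quotient.eq_zero_iff_mem] at this

end DefiningIdeal

lemma mem_closure_range_iff_exists_weight {s : ℕ} :
    s ∈ AddSubmonoid.closure (Set.range n) ↔ ∃ a : Fin m →₀ ℕ, weight n a = s := by
  rw [AddSubmonoid.mem_closure_range_iff]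
  exact exists_congr fun a => eq_comm

section MinimalGenerators

variable (hmin : ∀ T ⊆ Set.range n,
  AddSubmonoid.closure T = AddSubmonoid.closure (Set.range n) → T = Set.range n)
include hmin

lemma ne_zero_of_minimal (i : Fin m) : n i ≠ 0 := fun h =>
  AddSubmonoid.notMem_closure_diff_singleton hmin ⟨i, rfl⟩ (h ▸ zero_mem _)

lemma eq_single_of_weight_eq (hn : Function.Injective n) {a : Fin m →₀ ℕ} {i : Fin m}
    (ha : weight n a = n i) : a = single i 1 := by
  by_cases hai : a i = 0
  · have hmem : weight n a ∈ AddSubmonoid.closure (Set.range n \ {n i}) :=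
      AddSubmonoid.sum_mem _ fun j hj => AddSubmonoid.nsmul_mem _
        (AddSubmonoid.subset_closure (show n j ∈ Set.range n \ {n i} from
          ⟨⟨j, rfl⟩, fun hji => mem_support_iff.1 hj (hn hji ▸ hai)⟩)) _
    exact absurd (ha ▸ hmem) (AddSubmonoid.notMem_closure_diff_singleton hmin ⟨i, rfl⟩)
  · have hrest : weight n (a - single i 1) = 0 := by
      have := weight_sub_single_add (w := n) hai
      omega
    have : NonTorsionWeight ℕ n := nonTorsionWeight_of ℕ n (ne_zero_of_minimal hmin)
    rw [weight_eq_zero_iff_eq_zero] at hrest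
    rw [← sub_add_single_one_cancel hai, hrest, zero_add]

end MinimalGenerators

section Arf

variable {S : Set ℕ} [NeZero m] (hgen : S = AddSubmonoid.closure (Set.range n))
  (hmono : StrictMono n)
include hgen hmono

lemma HasMultiplicity.apply_zero_eq (hmul : HasMultiplicity S m) (hpos : ∀ i, n i ≠ 0) :
    n 0 = m := by
  obtain ⟨hmS, hm0, hle⟩ := hmul
  obtain ⟨a, ha⟩ := mem_closure_range_iff_exists_weight.1 (hgen ▸ hmS)
  obtain ⟨i, hi⟩ := Finsupp.ne_iff.1 (show a ≠ 0 by rintro rfl; simp at ha; omega)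
  have h1 : n 0 ≤ n i := hmono.monotone (Fin.zero_le i)
  have h2 : n i ≤ weight n a := le_weight_of_ne_zero' n hi
  have h3 := hle (n 0) (hgen ▸ AddSubmonoid.subset_closure ⟨0, rfl⟩) (hpos 0)
  omega

variable (hrep : ∀ (i : Fin m) (a : Fin m →₀ ℕ), weight n a = n i → a = single i 1)
include hrep

lemma exists_weight_eq_two_mul (hArf : IsArf S) {t : Fin m} (ht : t ≠ 0) :
    ∃ r : Fin m →₀ ℕ, weight n r = 2 * n t ∧ r t = 0 ∧ r 0 ≠ 0 := by
  have hle : n 0 ≤ n t := hmono.monotone (Fin.zero_le t)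
  have hmem (i : Fin m) : n i ∈ S := hgen ▸ AddSubmonoid.subset_closure ⟨i, rfl⟩
  obtain ⟨c, hc⟩ :=
    mem_closure_range_iff_exists_weight.1 (hgen ▸ hArf _ (hmem 0) _ (hmem t) hle)
  refine ⟨single 0 1 + c, by simp [weight_single, hc]; omega, ?_, by simp⟩
  suffices hct : c t = 0 by simp [Ne.symm ht, hct]
  -- otherwise `n t = n 0 + weight n (c - single t 1)` factors the generator `n t`
  by_contra hct
  have hsplit := weight_sub_single_add (w := n) hct
  have := hrep t (single 0 1 + (c - single t 1)) (by simp [weight_single]; omega)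
  simpa [single_apply, Ne.symm ht] using congrArg (· 0) this

lemma exists_weight_eq_two_mul_of_le_three (hArf : IsArf S) (hmul : HasMultiplicity S m)
    (hm : m ≤ 3) {t : Fin m} (ht : t ≠ 0) :
    ∃ r : Fin m →₀ ℕ, weight n r = 2 * n t ∧ ∀ s ≠ t, r s ≠ 0 := by
  obtain ⟨r, hr, hrt, hr0⟩ := exists_weight_eq_two_mul hgen hmono hrep hArf ht
  refine ⟨r, hr, fun s hst hrs => ?_⟩
  -- if `r s = 0`, then `3 = n 0` divides `2 * n t`, making `n t` a multiple of `n 0`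
  have hs0 : s ≠ 0 := by rintro rfl; exact hr0 hrs
  have hr' : r = single 0 (r 0) :=
    eq_single_of_le_three hm (Ne.symm ht) (Ne.symm hs0) (Ne.symm hst) hrt hrs
  have hpos (i : Fin m) : n i ≠ 0 := fun h =>
    single_ne_zero.2 one_ne_zero (hrep i 0 (by simp [h])).symm
  have h3 : n 0 = 3 := by
    rw [hmul.apply_zero_eq hgen hmono hpos]
    simp only [ne_eq, Fin.ext_iff, Fin.val_zero] at *
    omega
  have hdvd : 3 ∣ n t := by
    rw [hr', weight_single, smul_eq_mul, h3] at hr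
    omega
  have := hrep t (single 0 (n t / 3)) (by rw [weight_single, smul_eq_mul, h3]; omega)
  simpa [ht] using congrArg (· t) this

end Arf

namespace AddCon

variable (c : AddCon (Fin m →₀ ℕ)) (hpos : ∀ i, n i ≠ 0)
  (hrep : ∀ (i : Fin m) (a : Fin m →₀ ℕ), weight n a = n i → a = single i 1)
  (hc : ∀ a b : Fin m →₀ ℕ, weight n a = weight n b → (∀ i, a i ≠ 0 ∨ b i ≠ 0) → c a b)
include hpos

lemma rel_of_ne_zero_of_ne_zero {d : ℕ}
    (ih : ∀ a b : Fin m →₀ ℕ, weight n a = weight n b → weight n a < d → c a b)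
    {a b : Fin m →₀ ℕ} (hab : weight n a = weight n b) (hd : weight n a = d) {i : Fin m}
    (ha : a i ≠ 0) (hb : b i ≠ 0) : c a b := by
  have hwa := weight_sub_single_add (w := n) ha
  have hwb := weight_sub_single_add (w := n) hb
  have key := c.add (c.refl (single i 1))
    (ih (a - single i 1) (b - single i 1) (by omega) (by have := hpos i; omega))
  rwa [add_comm, sub_add_single_one_cancel ha, add_comm, sub_add_single_one_cancel hb] at key

include hrep hc

lemma rel_single_single {d : ℕ}
    (ih : ∀ a b : Fin m →₀ ℕ, weight n a = weight n b → weight n a < d → c a b)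
    {t s : Fin m} (hts : t ≠ s) {r : Fin m →₀ ℕ} (hr : weight n r = 2 * n t)
    (hrs : ∀ j ≠ t, r j ≠ 0) {α β : ℕ} (hβ : β ≠ 0) (hαβ : α * n t = β * n s)
    (hd : α * n t = d) : c (single t α) (single s β) := by
  have hα : 2 ≤ α := by
    have : α ≠ 0 := by rintro rfl; have := hpos s; simp_all
    have : α ≠ 1 := by
      rintro rfl
      have := hrep t (single s β) (by rw [weight_single, smul_eq_mul]; omega)
      simpa [hts] using congrArg (· t) this
    omega
  have hquad : c (single t 2) r := hc _ _ (by rw [weight_single, hr, smul_eq_mul])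
    fun j => by by_cases hj : j = t <;> simp [hj, hrs]
  have hsplit : single t α = single t (α - 2) + single t 2 := by
    rw [← single_add, Nat.sub_add_cancel hα]
  have hstep : c (single t α) (single t (α - 2) + r) := hsplit ▸ c.add (c.refl _) hquad
  have hw : weight n (single t (α - 2) + r) = α * n t := by
    rw [map_add, weight_single, smul_eq_mul, hr, ← add_mul, Nat.sub_add_cancel hα]
  -- `x_t^(α-2) x^r` shares the variable `x_s` with `x_s^β`
  refine c.trans hstep
    (rel_of_ne_zero_of_ne_zero c hpos ih ?_ (hw.trans hd) (i := s) ?_ (by simpa))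
  · rw [hw, hαβ, weight_single, smul_eq_mul]
  · simp [hts, hrs s hts.symm]

theorem rel_of_weight_eq [NeZero m] (hm : m ≤ 3)
    (hquad : ∀ t ≠ 0, ∃ r : Fin m →₀ ℕ, weight n r = 2 * n t ∧ ∀ s ≠ t, r s ≠ 0)
    {a b : Fin m →₀ ℕ} (hab : weight n a = weight n b) : c a b := by
  have : NonTorsionWeight ℕ n := nonTorsionWeight_of ℕ n hpos
  induction hd : weight n a using Nat.strong_induction_on generalizing a b with
  | _ d ih =>
  replace ih : ∀ a b : Fin m →₀ ℕ, weight n a = weight n b → weight n a < d → c a b :=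
    fun a b hab hlt => ih _ hlt hab rfl
  by_cases hcommon : ∃ i, a i ≠ 0 ∧ b i ≠ 0
  · obtain ⟨i, ha, hb⟩ := hcommon
    exact rel_of_ne_zero_of_ne_zero c hpos ih hab hd ha hb
  by_cases hfull : ∀ i, a i ≠ 0 ∨ b i ≠ 0
  · exact hc a b hab hfull
  push Not at hcommon hfull
  obtain ⟨i₀, ha₀, hb₀⟩ := hfull
  obtain rfl | ⟨u, hu⟩ := eq_or_ne a 0 |>.imp_right Finsupp.ne_iff.1
  · rw [map_zero, eq_comm, weight_eq_zero_iff_eq_zero] at hab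
    exact hab ▸ c.refl 0
  obtain rfl | ⟨v, hv⟩ := eq_or_ne b 0 |>.imp_right Finsupp.ne_iff.1
  · rw [map_zero, weight_eq_zero_iff_eq_zero] at hab
    exact hab ▸ c.refl 0
  have huv : u ≠ v := by rintro rfl; exact hv (hcommon u hu)
  have hu₀ : u ≠ i₀ := by rintro rfl; exact hu ha₀
  have hv₀ : v ≠ i₀ := by rintro rfl; exact hv hb₀
  have ha : a = single u (a u) :=
    eq_single_of_le_three hm huv hu₀ hv₀ (not_imp_comm.1 (hcommon v) hv) ha₀
  have hb : b = single v (b v) :=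
    eq_single_of_le_three hm (Ne.symm huv) hv₀ hu₀ (hcommon u hu) hb₀
  rw [ha, hb] at hab ⊢
  rw [ha] at hd
  simp only [weight_single, smul_eq_mul] at hab hd
  rcases eq_or_ne u 0 with rfl | hu0
  · obtain ⟨r, hr, hrs⟩ := hquad v (Ne.symm huv)
    exact c.symm
      (rel_single_single c hpos hrep hc ih (Ne.symm huv) hr hrs hu hab.symm (hab ▸ hd))
  · obtain ⟨r, hr, hrs⟩ := hquad u hu0
    exact rel_single_single c hpos hrep hc ih huv hr hrs hv hab hd

end AddCon

theorem span_fullSupportBinomials_inter_definingIdeal [NeZero m] (hm : m ≤ 3)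
    (hpos : ∀ i, n i ≠ 0)
    (hrep : ∀ (i : Fin m) (a : Fin m →₀ ℕ), weight n a = n i → a = single i 1)
    (hquad : ∀ t ≠ 0, ∃ r : Fin m →₀ ℕ, weight n r = 2 * n t ∧ ∀ s ≠ t, r s ≠ 0) :
    Ideal.span (fullSupportBinomials k (Fin m) ∩ definingIdeal k n) = definingIdeal k n := by
  refine le_antisymm (Ideal.span_le.2 Set.inter_subset_right)
    (definingIdeal_le_of_forall_monomial_sub_mem fun a b hab => ?_)
  refine (binomialCon _).rel_of_weight_eq hpos hrep (fun a b hab hfull => ?_) hm hquad hab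
  exact Ideal.subset_span
    ⟨⟨a, b, rfl, hfull⟩, monomial_sub_monomial_mem_definingIdeal_iff.2 hab⟩

lemma not_le_single_two_of_weight_eq {σ : Type*} {w : σ → ℕ} {i₁ i₂ i₃ : σ} (h₁₂ : i₁ ≠ i₂)
    (h₁₃ : i₁ ≠ i₃) (h₂₃ : i₂ ≠ i₃) (hw₂ : w i₁ < w i₂) (hw₃ : w i₁ < w i₃)
    {a b : σ →₀ ℕ} (hab : weight w a = weight w b) (hfull : ∀ i, a i ≠ 0 ∨ b i ≠ 0) :
    ¬ a ≤ single i₁ 2 := by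
  intro hle
  have hb (i : σ) (hi : i ≠ i₁) : b i ≠ 0 :=
    (hfull i).resolve_left fun ha => ha (by simpa [Ne.symm hi] using hle i)
  have ha : weight w a ≤ 2 * w i₁ := by simpa [weight_single] using weight_mono w hle
  have hb₂ := weight_sub_single_add (w := w) (hb i₂ (Ne.symm h₁₂))
  have hb₃ : w i₃ ≤ weight w (b - single i₂ 1) :=
    le_weight_of_ne_zero' w (by simpa [Ne.symm h₂₃] using hb i₃ (Ne.symm h₁₃))
  omega

theorem span_ne_definingIdeal_of_four_le {S : Set ℕ} (hArf : IsArf S)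
    (hgen : S = AddSubmonoid.closure (Set.range n)) (hmono : StrictMono n) (hm : 4 ≤ m)
    {G : Set (MvPolynomial (Fin m) k)} (hG : G ⊆ fullSupportBinomials k (Fin m)) :
    Ideal.span G ≠ definingIdeal k n := by
  intro hspan
  let i₀ : Fin m := ⟨0, by omega⟩
  let i₁ : Fin m := ⟨1, by omega⟩
  let i₂ : Fin m := ⟨2, by omega⟩
  let i₃ : Fin m := ⟨3, by omega⟩
  have h₀₁ : n i₀ ≤ n i₁ := hmono.monotone (by simp [i₀, i₁, Fin.le_def])
  have hmem (i : Fin m) : n i ∈ S := hgen ▸ AddSubmonoid.subset_closure ⟨i, rfl⟩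
  obtain ⟨c, hc⟩ :=
    mem_closure_range_iff_exists_weight.1 (hgen ▸ hArf _ (hmem i₀) _ (hmem i₁) h₀₁)
  let M : Ideal (MvPolynomial (Fin m) k) :=
    Ideal.span ((monomial · 1) '' {w | ¬ w ≤ single i₁ 2})
  have hIM : definingIdeal k n ≤ M := hspan ▸ Ideal.span_le.2 fun g hg => by
    obtain ⟨a, b, rfl, hfull⟩ := hG hg
    have hab := monomial_sub_monomial_mem_definingIdeal_iff.1 (hspan ▸ Ideal.subset_span hg)
    have key {a b : Fin m →₀ ℕ} : weight n a = weight n b → (∀ i, a i ≠ 0 ∨ b i ≠ 0) →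
        ¬ a ≤ single i₁ 2 :=
      not_le_single_two_of_weight_eq (i₂ := i₂) (i₃ := i₃) (by simp [i₁, i₂, Fin.ext_iff])
        (by simp [i₁, i₃, Fin.ext_iff]) (by simp [i₂, i₃, Fin.ext_iff])
        (hmono (by simp [i₁, i₂, Fin.lt_def])) (hmono (by simp [i₁, i₃, Fin.lt_def]))
    exact M.sub_mem (Ideal.subset_span ⟨a, key hab hfull, rfl⟩)
      (Ideal.subset_span ⟨b, key hab.symm fun i => (hfull i).symm, rfl⟩)
  have hne : single i₀ 1 + c ≠ single i₁ 2 := fun h => by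
    simpa [i₀, i₁] using congrArg (· i₀) h
  have hf :
      monomial (single i₁ 2) (1 : k) - monomial (single i₀ 1 + c) 1 ∈ definingIdeal k n :=
    monomial_sub_monomial_mem_definingIdeal_iff.2 (by
      simp only [map_add, weight_single, smul_eq_mul, hc]
      omega)
  obtain ⟨w, hw, hle⟩ := mem_ideal_span_monomial_image.1 (hIM hf) (single i₁ 2)
    (by simp [MvPolynomial.mem_support_iff, coeff_monomial, hne])
  exact hw hle

end SemigroupRing

theorem arf_generic_iff_general (k : Type*) [Field k] (S : Set ℕ) (m : ℕ)
    (hArf : IsArf S) (hmul : HasMultiplicity S m)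
    (n : Fin m → ℕ) (hmono : StrictMono n)
    (hgen : S = (AddSubmonoid.closure (Set.range n) : Set ℕ))
    (hmin : ∀ T : Set ℕ, T ⊆ Set.range n →
      S = (AddSubmonoid.closure T : Set ℕ) → T = Set.range n) :
    (∃ G : Set (MvPolynomial (Fin m) k),
        Ideal.span G = definingIdeal k n ∧
        (∀ G' ⊆ G, Ideal.span G' = definingIdeal k n → G' = G) ∧
        ∀ p ∈ G, ∃ a b : Fin m → ℕ,
          p = (∏ i, MvPolynomial.X i ^ a i) - ∏ i, MvPolynomial.X i ^ b i ∧
          ∀ i, a i ≠ 0 ∨ b i ≠ 0) ↔ m ≤ 3 := by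
  constructor
  · rintro ⟨G, hspan, -, hG⟩
    by_contra! hm
    exact span_ne_definingIdeal_of_four_le hArf hgen hmono hm
      (fun p hp => mem_fullSupportBinomials_iff.2 (hG p hp)) hspan
  · intro hm
    have : NeZero m := ⟨hmul.2.1⟩
    have hmin' : ∀ T ⊆ Set.range n, AddSubmonoid.closure T =
        AddSubmonoid.closure (Set.range n) → T = Set.range n :=
      fun T hT h => hmin T hT (by rw [hgen, h])
    have hrep (i : Fin m) (a : Fin m →₀ ℕ) (ha : weight n a = n i) : a = single i 1 :=
      eq_single_of_weight_eq hmin' hmono.injective ha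
    have hspan := span_fullSupportBinomials_inter_definingIdeal (k := k) hm
      (ne_zero_of_minimal hmin') hrep
      fun t ht => exists_weight_eq_two_mul_of_le_three hgen hmono hrep hArf hmul hm ht
    obtain ⟨G, hGsub, hGspan, hGmin⟩ := Ideal.exists_minimal_subset_span_eq
      (fullSupportBinomials k (Fin m) ∩ definingIdeal k n)
    rw [hspan] at hGspan hGmin
    exact ⟨G, hGspan, hGmin, fun p hp => mem_fullSupportBinomials_iff.1 (hGsub hp).1⟩

/-- Let `S` be an Arf numerical semigroup with multiplicity `m ≥ 2`,
minimally generated by `n 0 < … < n (m-1)` (Arf semigroups have maximal embedding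
dimension, so there are `m` minimal generators), and let `k` be a field. Then the
defining ideal `I_S` of `k[S]` is generic — i.e. it has a minimal generating set
consisting of binomials `x^a - x^b` with full support — if and only if `m ≤ 3`. -/
theorem arf_generic_iff (k : Type*) [Field k] (S : Set ℕ) (m : ℕ)
    (hNS : IsNumericalSemigroup S) (hArf : IsArf S)
    (hmul : HasMultiplicity S m) (hm : 2 ≤ m)
    (n : Fin m → ℕ) (hmono : StrictMono n)
    (hgen : S = (AddSubmonoid.closure (Set.range n) : Set ℕ))
    (hmin : ∀ T : Set ℕ, T ⊆ Set.range n →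
      S = (AddSubmonoid.closure T : Set ℕ) → T = Set.range n) :
    (∃ G : Set (MvPolynomial (Fin m) k),
        Ideal.span G = definingIdeal k n ∧
        (∀ G' ⊆ G, Ideal.span G' = definingIdeal k n → G' = G) ∧
        ∀ p ∈ G, ∃ a b : Fin m → ℕ,
          p = (∏ i, MvPolynomial.X i ^ a i) - ∏ i, MvPolynomial.X i ^ b i ∧
          ∀ i, a i ≠ 0 ∨ b i ≠ 0) ↔ m ≤ 3 :=
  arf_generic_iff_general k S m hArf hmul n hmono hgen hmin
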